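/- arXiv:1402.2500 — 3 statements merged into one kernel-verified Lean document; each statement's English description precedes it below -/
import Mathlib

section
/- Let (W,S) be a Coxeter system with reflection set T and length function ℓ. Let w = t1⋯tn be a minimal-length factorization of w ∈ W into reflections, and let x ∈ W. Then there is a factorization w = t1'⋯tn' in the Hurwitz orbit of (t1,…,tn) and an integer 0 ≤ i ≤ n such that along the sequence x, xt1', xt1't2', …, xt1'⋯tn' = xw the S-length ℓ strictly decreases for the first i steps and strictly increases for the remaining n − i steps. In particular, when x = e one has i = 0, so there is a factorization w = t1'⋯tn' in the Hurwitz orbit of (t1,…,tn) with ℓ(t1'⋯t_{k}') < ℓ(t1'⋯t_{k+1}') for all 0 ≤ k < n. -/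
/-- The Hurwitz move `σᵢ` on tuples of group elements (represented as lists):
`(t₁, …, a, b, …, tₙ) ↦ (t₁, …, a b a, a, …, tₙ)` (recall that reflections are
involutions, so `a b a = a b a⁻¹`). -/
def HurwitzMove {W : Type*} [Group W] (l l' : List W) : Prop :=
  ∃ (l₁ l₂ : List W) (a b : W),
    l = l₁ ++ [a, b] ++ l₂ ∧ l' = l₁ ++ [a * b * a, a] ++ l₂

/-- The reflection length `ℓ_T` of `w`: the minimal length of a factorization of `w`
into reflections. -/
noncomputable def reflLength {B : Type*} {W : Type*} [Group W] {M : CoxeterMatrix B}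
    (cs : CoxeterSystem M W) (w : W) : ℕ :=
  sInf {n | ∃ l : List W, (∀ t ∈ l, cs.IsReflection t) ∧ l.prod = w ∧ l.length = n}

/-!
Strong exchange, derived from Bourbaki's sign representation of `W` on `W × ℤˣ`, shows that
when `a ≠ b` are both right inversions of `v`, one of `v a b` and `v b a` is shorter than `v`.
A peak `x t₁ ⋯ tₖ` of the path `x, x t₁, x t₁ t₂, …`, longer than both neighbours, is such a `v`
for `a = tₖ`, `b = tₖ₊₁` (distinct by minimality), so a Hurwitz move `σₖ^{±1}` lowers it and
decreases the sum of the lengths along the path. A path without peaks whose consecutive lengths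
always differ first descends and then ascends; from `x = e` it cannot descend.
-/

open scoped Classical

theorem inv_mul_mul_eq_iff_eq_mul_mul_inv {G : Type*} [Group G] {a t r : G} :
    a⁻¹ * t * a = r ↔ t = a * r * a⁻¹ := by
  constructor <;> rintro rfl <;> group

theorem List.exists_eq_append_cons_cons {α : Type*} {l : List α} {k : ℕ} (hk : k + 2 ≤ l.length) :
    ∃ u a b v, l = u ++ a :: b :: v ∧ u.length = k := by
  refine ⟨l.take k, l[k], l[k + 1], l.drop (k + 2), ?_, by simp; omega⟩
  rw [List.getElem_cons_drop, List.getElem_cons_drop, List.take_append_drop]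

theorem List.prod_append_cons_cons_eq_of_mul_eq {M : Type*} [Monoid M] (u v : List M)
    {a b c d : M} (h : c * d = a * b) : (u ++ c :: d :: v).prod = (u ++ a :: b :: v).prod := by
  simp only [List.prod_append, List.prod_cons, ← mul_assoc, h]

theorem exists_strictAnti_then_strictMono_of_no_peak {α : Type*} [LinearOrder α] {f : ℕ → α}
    {n : ℕ} (hne : ∀ k < n, f (k + 1) ≠ f k)
    (hpeak : ∀ k, k + 2 ≤ n → ¬(f k < f (k + 1) ∧ f (k + 2) < f (k + 1))) :
    ∃ i ≤ n, (∀ k < i, f (k + 1) < f k) ∧ ∀ k, i ≤ k → k < n → f k < f (k + 1) := by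
  have hex : ∃ i, n ≤ i ∨ f i < f (i + 1) := ⟨n, Or.inl le_rfl⟩
  refine ⟨Nat.find hex, Nat.find_min' hex (Or.inl le_rfl), fun k hk => ?_, fun k hik hkn => ?_⟩
  · have := Nat.find_min hex hk
    rw [not_or, not_le, not_lt] at this
    exact lt_of_le_of_ne this.2 (hne k this.1)
  · induction k, hik using Nat.le_induction with
    | base => exact (Nat.find_spec hex).resolve_left (by omega)
    | succ k hik ih =>
      have hup := ih (by omega)
      exact lt_of_le_of_ne (not_lt.mp fun h => hpeak k (by omega) ⟨hup, h⟩) (hne (k + 1) hkn).symm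

namespace CoxeterSystem

variable {B W : Type*} [Group W] {M : CoxeterMatrix B} (cs : CoxeterSystem M W)

local prefix:100 "s" => cs.simple
local prefix:100 "π" => cs.wordProd
local prefix:100 "ℓ" => cs.length
local prefix:100 "ris" => cs.rightInvSeq

theorem simple_mul_mul_simple_eq_iff {i : B} {t r : W} : s i * t * s i = r ↔ t = s i * r * s i := by
  constructor <;> rintro rfl <;> simp [mul_assoc, cs.simple_mul_simple_cancel_left]

/-- Bourbaki's action of `s i` on `W × ℤˣ`, where `(t, ε)` stands for the root `ε α_t`. -/
noncomputable def simpleSignPerm (i : B) : Equiv.Perm (W × ℤˣ) :=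
  Function.Involutive.toPerm (fun x => (s i * x.1 * s i, (if x.1 = s i then -1 else 1) * x.2))
    (by
      rintro ⟨t, ε⟩
      by_cases ht : t = s i <;>
        simp [ht, mul_assoc, mul_eq_one_iff_eq_inv, cs.inv_simple,
          cs.simple_mul_simple_cancel_left])

theorem simpleSignPerm_apply (i : B) (t : W) (ε : ℤˣ) :
    cs.simpleSignPerm i (t, ε) = (s i * t * s i, (if t = s i then -1 else 1) * ε) := rfl

theorem simpleSignPerm_mul_pow_apply (i j : B) (n : ℕ) (t : W) (ε : ℤˣ) :
    ((cs.simpleSignPerm i * cs.simpleSignPerm j) ^ n) (t, ε) =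
      (((s j * s i) ^ n)⁻¹ * t * (s j * s i) ^ n,
        (∏ k ∈ Finset.range (2 * n), if (s j * s i) ^ k * s j = t then -1 else 1) * ε) := by
  set q := s j * s i
  have hsq : SemiconjBy (s j) q⁻¹ q := by
    simp [SemiconjBy, q, mul_assoc, cs.inv_simple]
  induction n with
  | zero => simp
  | succ n ih =>
    have hq : s j * (q ^ n)⁻¹ = q ^ n * s j := by simpa using (hsq.pow_right n).eq
    rw [pow_succ', Equiv.Perm.mul_apply, Equiv.Perm.mul_apply, ih, simpleSignPerm_apply,
      simpleSignPerm_apply]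
    have hconj : ∀ k, q ^ n * (q ^ k * s j) * (q ^ n)⁻¹ = q ^ (2 * n + k) * s j := by
      intro k
      rw [mul_assoc, mul_assoc, hq, ← mul_assoc, ← mul_assoc, ← pow_add, ← pow_add]
      congr 2
      ring
    have h0 : (q ^ n)⁻¹ * t * q ^ n = s j ↔ q ^ (2 * n) * s j = t := by
      have h := hconj 0
      rw [pow_zero, one_mul, add_zero] at h
      rw [inv_mul_mul_eq_iff_eq_mul_mul_inv, h, eq_comm]
    have h1 : s j * ((q ^ n)⁻¹ * t * q ^ n) * s j = s i ↔ q ^ (2 * n + 1) * s j = t := by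
      rw [cs.simple_mul_mul_simple_eq_iff, inv_mul_mul_eq_iff_eq_mul_mul_inv, eq_comm, ← hconj 1,
        pow_one]
    simp only [h0, h1, Prod.mk.injEq]
    constructor
    · simp only [pow_succ, mul_inv_rev, q, cs.inv_simple, mul_assoc]
    · rw [show 2 * (n + 1) = 2 * n + 1 + 1 by ring, Finset.prod_range_succ, Finset.prod_range_succ]
      ac_rfl

theorem isLiftable_simpleSignPerm : M.IsLiftable cs.simpleSignPerm := by
  intro i j
  ext ⟨t, ε⟩ : 1
  have hq : (s j * s i) ^ M i j = 1 := cs.simple_mul_simple_pow' i j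
  have hperiod : ∀ k, (if (s j * s i) ^ (M i j + k) * s j = t then (-1 : ℤˣ) else 1) =
      if (s j * s i) ^ k * s j = t then -1 else 1 := by
    intro k
    rw [pow_add, hq, one_mul]
  rw [simpleSignPerm_mul_pow_apply, hq, two_mul, Finset.prod_range_add]
  simp only [hperiod, Int.units_mul_self, inv_one, one_mul, mul_one, Equiv.Perm.one_apply]

noncomputable def signRep : W →* Equiv.Perm (W × ℤˣ) :=
  cs.lift ⟨cs.simpleSignPerm, cs.isLiftable_simpleSignPerm⟩

theorem signRep_simple (i : B) : cs.signRep (s i) = cs.simpleSignPerm i :=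
  cs.lift_apply_simple _ i

theorem signRep_wordProd_apply (ω : List B) (t : W) (ε : ℤˣ) :
    cs.signRep (π ω) (t, ε) =
      (π ω * t * (π ω)⁻¹, ((ris ω).map fun r => if r = t then -1 else 1).prod * ε) := by
  induction ω with
  | nil => simp
  | cons i ω ih =>
    have h : π ω * t * (π ω)⁻¹ = s i ↔ (π ω)⁻¹ * s i * π ω = t := by
      rw [inv_mul_mul_eq_iff_eq_mul_mul_inv, eq_comm]
    rw [wordProd_cons, map_mul, Equiv.Perm.mul_apply, ih, signRep_simple, simpleSignPerm_apply,
      rightInvSeq, List.map_cons, List.prod_cons, h]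
    simp [mul_assoc, mul_inv_rev, cs.inv_simple]

theorem signRep_wordProd_apply_of_not_mem {ω : List B} {t : W} (ht : t ∉ ris ω) (ε : ℤˣ) :
    cs.signRep (π ω) (t, ε) = (π ω * t * (π ω)⁻¹, ε) := by
  rw [signRep_wordProd_apply, List.prod_eq_one, one_mul]
  simp only [List.mem_map]
  rintro _ ⟨r, hr, rfl⟩
  exact if_neg (ne_of_mem_of_not_mem hr ht)

theorem signRep_apply_fst (w t : W) (ε : ℤˣ) : (cs.signRep w (t, ε)).1 = w * t * w⁻¹ := by
  obtain ⟨ω, rfl⟩ := cs.wordProd_surjective w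
  rw [signRep_wordProd_apply]

theorem signRep_apply_neg (w t : W) (ε : ℤˣ) :
    cs.signRep w (t, -ε) = ((cs.signRep w (t, ε)).1, -(cs.signRep w (t, ε)).2) := by
  obtain ⟨ω, rfl⟩ := cs.wordProd_surjective w
  simp [signRep_wordProd_apply]

theorem IsReflection.signRep_apply_self {t : W} (ht : cs.IsReflection t) (ε : ℤˣ) :
    cs.signRep t (t, ε) = (t, -ε) := by
  obtain ⟨u, i, rfl⟩ := ht
  set p := cs.signRep u⁻¹ (u * s i * u⁻¹, ε)
  have hp : p.1 = s i := by
    rw [signRep_apply_fst]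
    group
  have hback : cs.signRep u p = (u * s i * u⁻¹, ε) := by
    rw [← Equiv.Perm.mul_apply, ← map_mul, mul_inv_cancel, map_one, Equiv.Perm.one_apply]
  have hflip : cs.simpleSignPerm i p = (p.1, -p.2) := by
    rw [← Prod.mk.eta (p := p), simpleSignPerm_apply, hp]
    simp
  rw [map_mul, map_mul, Equiv.Perm.mul_apply, Equiv.Perm.mul_apply, signRep_simple, hflip,
    ← Prod.mk.eta (p := p), signRep_apply_neg, hback]

/-- The strong exchange condition. -/
theorem mem_rightInvSeq_of_isRightInversion {ω : List B} {t : W}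
    (ht : cs.IsRightInversion (π ω) t) : t ∈ ris ω := by
  obtain ⟨ω', hω', hω't⟩ := cs.exists_isReduced (π ω * t)
  by_contra hmem
  have hsign : (cs.signRep (π ω') (t, 1)).2 = -1 := by
    rw [← hω't, map_mul, Equiv.Perm.mul_apply, ht.1.signRep_apply_self, signRep_apply_neg,
      signRep_wordProd_apply_of_not_mem cs hmem]
  have hmem' : t ∈ ris ω' := by
    by_contra h
    rw [signRep_wordProd_apply_of_not_mem cs h] at hsign
    exact units_ne_neg_self 1 hsign
  have := cs.isRightInversion_of_mem_rightInvSeq hω' hmem'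
  rw [← hω't] at this
  exact ht.1.not_isRightInversion_mul_left_iff.mpr ht this

theorem eq_of_isRightInversion_of_not_isRightInversion_simple_mul {v a : W} {i : B}
    (ha : cs.IsRightInversion v a)
    (ha' : ¬cs.IsRightInversion (s i * v) a) : a = v⁻¹ * s i * v := by
  obtain ⟨ω, hred, hω⟩ := cs.exists_isReduced (s i * v)
  have hv : v = π (i :: ω) := by rw [wordProd_cons, ← hω, cs.simple_mul_simple_cancel_left]
  rw [hv] at ha
  rcases List.mem_cons.mp (cs.mem_rightInvSeq_of_isRightInversion ha) with h | h
  · rw [h, ← hω, mul_inv_rev, cs.inv_simple, mul_assoc, mul_assoc,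
      cs.simple_mul_simple_cancel_left, mul_assoc]
  · rw [hω] at ha'
    exact absurd (cs.isRightInversion_of_mem_rightInvSeq hred h) ha'

theorem length_mul_le_length_simple_mul_mul_add_one (i : B) (v g : W) :
    ℓ (v * g) ≤ ℓ (s i * v * g) + 1 := by
  calc ℓ (v * g) = ℓ (s i * (s i * v * g)) := by
        rw [mul_assoc, cs.simple_mul_simple_cancel_left]
    _ ≤ ℓ (s i * v * g) + 1 := by
        have := cs.length_mul_le (s i) (s i * v * g)
        rw [length_simple] at this
        omega

/-- Induction on `ℓ v` through a left descent `s i`: a right inversion of `v` that is not one of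
`s i * v` equals `v⁻¹ * s i * v`, so at most one of `a`, `b` is lost. -/
theorem length_mul_mul_lt_or_of_isRightInversion {v a b : W} (ha : cs.IsRightInversion v a)
    (hb : cs.IsRightInversion v b) (hab : a ≠ b) :
    ℓ (v * (a * b)) < ℓ v ∨ ℓ (v * (b * a)) < ℓ v := by
  induction hn : ℓ v generalizing v with
  | zero => exact absurd ha.2 (by omega)
  | succ n ih =>
    obtain ⟨i, hi⟩ := cs.exists_leftDescent_of_ne_one (w := v) (by rintro rfl; simp at hn)
    have hlen : ℓ (s i * v) = n := by
      have := cs.isLeftDescent_iff.mp hi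
      omega
    by_cases hA : cs.IsRightInversion (s i * v) a <;>
      by_cases hB : cs.IsRightInversion (s i * v) b
    · rcases ih hA hB hlen with h | h
      · have := cs.length_mul_le_length_simple_mul_mul_add_one i v (a * b)
        omega
      · have := cs.length_mul_le_length_simple_mul_mul_add_one i v (b * a)
        omega
    · right
      rw [cs.eq_of_isRightInversion_of_not_isRightInversion_simple_mul hb hB]
      have := hA.2
      group at this ⊢
      omega
    · left
      rw [cs.eq_of_isRightInversion_of_not_isRightInversion_simple_mul ha hA]
      have := hB.2
      group at this ⊢
      omega
    · exact absurd ((cs.eq_of_isRightInversion_of_not_isRightInversion_simple_mul ha hA).trans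
        (cs.eq_of_isRightInversion_of_not_isRightInversion_simple_mul hb hB).symm) hab

theorem reflLength_le {l : List W} (hl : ∀ t ∈ l, cs.IsReflection t) :
    reflLength cs l.prod ≤ l.length :=
  Nat.sInf_le ⟨l, hl, rfl, rfl⟩

def IsMinimalReflFactorization (l : List W) : Prop :=
  (∀ t ∈ l, cs.IsReflection t) ∧ l.length = reflLength cs l.prod

variable {cs} in
theorem IsMinimalReflFactorization.ne {u v : List W} {a b : W}
    (h : cs.IsMinimalReflFactorization (u ++ a :: b :: v)) : a ≠ b := by
  rintro rfl
  have hrefl : ∀ t ∈ u ++ v, cs.IsReflection t := fun t ht => h.1 t (by simp at ht ⊢; tauto)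
  have hprod : (u ++ v).prod = (u ++ a :: a :: v).prod := by
    simp [← mul_assoc, (h.1 a (by simp)).mul_self]
  have := cs.reflLength_le hrefl
  rw [hprod, ← h.2] at this
  simp at this

variable {cs} in
theorem IsMinimalReflFactorization.replace {u v : List W} {a b c d : W}
    (h : cs.IsMinimalReflFactorization (u ++ a :: b :: v)) (hc : cs.IsReflection c)
    (hd : cs.IsReflection d) (hcd : c * d = a * b) :
    cs.IsMinimalReflFactorization (u ++ c :: d :: v) := by
  refine ⟨fun t ht => ?_, ?_⟩
  · simp only [List.mem_append, List.mem_cons] at ht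
    rcases ht with ht | rfl | rfl | ht
    · exact h.1 t (by simp [ht])
    · exact hc
    · exact hd
    · exact h.1 t (by simp [ht])
  · rw [List.prod_append_cons_cons_eq_of_mul_eq u v hcd, ← h.2]
    simp

noncomputable def pathLength (x : W) : List W → ℕ
  | [] => ℓ x
  | a :: l => ℓ x + pathLength (x * a) l

theorem pathLength_append_lt_append {x : W} {u l l' : List W}
    (h : cs.pathLength (x * u.prod) l' < cs.pathLength (x * u.prod) l) :
    cs.pathLength x (u ++ l') < cs.pathLength x (u ++ l) := by
  induction u generalizing x with
  | nil => simpa using h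
  | cons a u ih =>
    have := ih (x := x * a) (by simpa [mul_assoc] using h)
    simp only [List.cons_append, pathLength]
    omega

theorem pathLength_cons_cons_lt {x a b c d : W} (v : List W) (hcd : c * d = a * b)
    (h : ℓ (x * c) < ℓ (x * a)) :
    cs.pathLength x (c :: d :: v) < cs.pathLength x (a :: b :: v) := by
  simp only [pathLength, mul_assoc, hcd]
  omega

theorem exists_hurwitz_lowering_peak (u v : List W) {z a b : W} (ha : cs.IsRightInversion z a)
    (hb : cs.IsRightInversion z b) (hab : a ≠ b) :
    ∃ c d, cs.IsReflection c ∧ cs.IsReflection d ∧ c * d = a * b ∧ ℓ (z * a * c) < ℓ z ∧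
      Relation.EqvGen HurwitzMove (u ++ a :: b :: v) (u ++ c :: d :: v) := by
  rcases cs.length_mul_mul_lt_or_of_isRightInversion ha hb hab with h | h
  · refine ⟨b, b * a * b, hb.1, by simpa [hb.1.inv] using ha.1.conj b, ?_, by rwa [mul_assoc], ?_⟩
    · rw [← mul_assoc, ← mul_assoc, hb.1.mul_self, one_mul]
    · refine .symm _ _ (.rel _ _ ⟨u, v, b, b * a * b, by simp, ?_⟩)
      rw [show b * (b * a * b) * b = b * b * a * (b * b) by simp only [mul_assoc],
        hb.1.mul_self, one_mul, mul_one]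
      simp
  · refine ⟨a * b * a, a, by simpa [ha.1.inv] using hb.1.conj a, ha.1, ?_, ?_,
      .rel _ _ ⟨u, v, a, b, by simp, by simp⟩⟩
    · rw [mul_assoc, ha.1.mul_self, mul_one]
    · rwa [show z * a * (a * b * a) = z * (a * a) * (b * a) by simp only [mul_assoc],
        ha.1.mul_self, mul_one]

theorem exists_hurwitz_no_peak (x : W) {l : List W} (hl : cs.IsMinimalReflFactorization l) :
    ∃ l', Relation.EqvGen HurwitzMove l l' ∧ cs.IsMinimalReflFactorization l' ∧
      l'.prod = l.prod ∧ l'.length = l.length ∧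
      ∀ k, k + 2 ≤ l'.length → ¬(ℓ (x * (l'.take k).prod) < ℓ (x * (l'.take (k + 1)).prod) ∧
        ℓ (x * (l'.take (k + 2)).prod) < ℓ (x * (l'.take (k + 1)).prod)) := by
  induction hN : cs.pathLength x l using Nat.strong_induction_on generalizing l with
  | _ N ih =>
  by_cases hpeak : ∃ k, k + 2 ≤ l.length ∧ ℓ (x * (l.take k).prod) < ℓ (x * (l.take (k + 1)).prod) ∧
      ℓ (x * (l.take (k + 2)).prod) < ℓ (x * (l.take (k + 1)).prod)
  · obtain ⟨k, hk, hup, hdown⟩ := hpeak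
    obtain ⟨u, a, b, v, rfl, rfl⟩ := List.exists_eq_append_cons_cons hk
    simp only [List.take_left', List.take_append, le_add_iff_nonneg_right, zero_le,
      List.take_of_length_le, add_tsub_cancel_left, List.take_succ_cons, List.take_zero,
      List.prod_append, List.prod_cons, List.prod_nil, mul_one, ← mul_assoc] at hup hdown
    have hback : x * u.prod * a * a = x * u.prod := by
      rw [mul_assoc _ a a, (hl.1 a (by simp)).mul_self, mul_one]
    obtain ⟨c, d, hc, hd, hcd, hlt, hmove⟩ := cs.exists_hurwitz_lowering_peak u v
      ⟨hl.1 a (by simp), by rwa [hback]⟩ ⟨hl.1 b (by simp), hdown⟩ hl.ne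
    rw [hback] at hlt
    obtain ⟨l', hmove', hl', hprod, hlen, hnopeak⟩ := ih _
      (hN ▸ cs.pathLength_append_lt_append (cs.pathLength_cons_cons_lt v hcd hlt))
      (hl.replace hc hd hcd) rfl
    refine ⟨l', hmove.trans _ _ _ hmove', hl', ?_, ?_, hnopeak⟩
    · rw [hprod, List.prod_append_cons_cons_eq_of_mul_eq u v hcd]
    · simp [hlen]
  · exact ⟨l, .refl _, hl, rfl, rfl, fun k hk h => hpeak ⟨k, hk, h⟩⟩

end CoxeterSystem

/-- Let `(W,S)` be a Coxeter system, let `w = t₁ ⋯ tₙ` be a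
minimal-length factorization of `w` into reflections, and let `x ∈ W`.  Then there is a
factorization `w = t₁' ⋯ tₙ'` in the Hurwitz orbit of `(t₁, …, tₙ)` and an index
`0 ≤ i ≤ n` such that along the path `x, x t₁', x t₁' t₂', …, x t₁' ⋯ tₙ' = x w` the
`S`-length strictly decreases for the first `i` steps and strictly increases afterwards;
moreover when `x = e` one has `i = 0` (so the lengths of the partial products strictly
increase). -/
theorem exists_hurwitz_orbit_valley_path
    {W : Type*} [Group W] {B : Type*}
    (M : CoxeterMatrix B) (cs : CoxeterSystem M W)
    (w x : W) (l : List W)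
    (hrefl : ∀ t ∈ l, cs.IsReflection t) (hprod : l.prod = w)
    (hred : l.length = reflLength cs w) :
    ∃ l' : List W, Relation.EqvGen HurwitzMove l l' ∧ l'.prod = w ∧
      ∃ i ≤ l.length,
        (∀ k < i,
          cs.length (x * (l'.take (k + 1)).prod) < cs.length (x * (l'.take k).prod)) ∧
        (∀ k, i ≤ k → k < l.length →
          cs.length (x * (l'.take k).prod) < cs.length (x * (l'.take (k + 1)).prod)) ∧
        (x = 1 → i = 0) := by
  subst hprod
  obtain ⟨l', hmove, hl', hprod, hlen, hpeak⟩ := cs.exists_hurwitz_no_peak x ⟨hrefl, hred⟩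
  have hne : ∀ k < l.length,
      cs.length (x * (l'.take (k + 1)).prod) ≠ cs.length (x * (l'.take k).prod) := by
    intro k hk
    rw [List.prod_take_succ _ _ (hlen ▸ hk), ← mul_assoc]
    exact (hl'.1 _ (List.getElem_mem _)).length_mul_left_ne _
  obtain ⟨i, hi, hdown, hup⟩ :=
    exists_strictAnti_then_strictMono_of_no_peak hne (hlen ▸ hpeak)
  refine ⟨l', hmove, hprod, i, hi, hdown, hup, fun hx => Nat.eq_zero_of_not_pos fun hpos => ?_⟩
  simpa [hx] using hdown 0 hpos
end

section
/- Let (W,S) be a Coxeter system with reflection set T, and let r, s ∈ T be two distinct reflections. Then the orbit of the pair (r,s) under the Hurwitz action of the braid group B_2 is exactly the set of all pairs (t1, t2) of reflections of the subgroup ⟨r,s⟩ such that t1 t2 = r s. -/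
/-!
Hurwitz moves preserve the product of the pair and, since reflections are involutions
closed under conjugation, the property of consisting of reflections of `⟨r, s⟩`; this
gives one inclusion. Conversely, with `c = r * s`, every element of `⟨r, s⟩` is `c ^ k`
or `c ^ k * r`, and length parity rules out `c ^ k` being a reflection. So `t₁ = c ^ k * r`,
and then `t₂ = c ^ (k - 1) * r`. The move `σ₁` sends `(c ^ k * r, c ^ (k - 1) * r)` to
`(c ^ (k + 1) * r, c ^ k * r)`, so every such pair lies in the orbit of
`(r, s) = (r, c⁻¹ * r)`.
-/

theorem Relation.EqvGen.iff_of_forall_iff {α : Type*} {rel : α → α → Prop} {P : α → Prop}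
    (hP : ∀ a b, rel a b → (P a ↔ P b)) {a b : α} (h : Relation.EqvGen rel a b) :
    P a ↔ P b := by
  induction h with
  | rel _ _ h => exact hP _ _ h
  | refl => exact Iff.rfl
  | symm _ _ _ ih => exact ih.symm
  | trans _ _ _ _ _ ih₁ ih₂ => exact ih₁.trans ih₂

theorem Relation.eqvGen_of_forall_rel_add_one {α : Type*} {rel : α → α → Prop} {f : ℤ → α}
    (h : ∀ k, rel (f k) (f (k + 1))) (k : ℤ) : Relation.EqvGen rel (f 0) (f k) := by
  induction k using Int.induction_on with
  | zero => exact .refl _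
  | succ i ih => exact ih.trans _ _ _ (.rel _ _ (h i))
  | pred i ih =>
    refine ih.trans _ _ _ (.symm _ _ (.rel _ _ ?_))
    simpa only [sub_add_cancel] using h (-i - 1)

section Group

variable {W : Type*} [Group W]

theorem hurwitzMove_pair (a b : W) : HurwitzMove [a, b] [a * b * a, a] :=
  ⟨[], [], a, b, rfl, rfl⟩

namespace HurwitzMove

variable {l l' : List W}

theorem forall_mem_iff {X : Set W} (hmul : ∀ a ∈ X, ∀ b ∈ X, a * b * a ∈ X)
    (hsq : ∀ a ∈ X, a * a = 1) (h : HurwitzMove l l') :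
    (∀ x ∈ l, x ∈ X) ↔ (∀ x ∈ l', x ∈ X) := by
  obtain ⟨l₁, l₂, a, b, rfl, rfl⟩ := h
  simp only [List.forall_mem_append, List.forall_mem_cons, List.not_mem_nil,
    IsEmpty.forall_iff, implies_true, and_true]
  refine and_congr_left' (and_congr_right' ⟨fun ⟨ha, hb⟩ ↦ ⟨hmul a ha b hb, ha⟩, ?_⟩)
  rintro ⟨haba, ha⟩
  have hb : a * (a * b * a) * a = b := by
    rw [show a * (a * b * a) * a = a * a * b * (a * a) by group, hsq a ha, one_mul, mul_one]
  exact ⟨ha, hb ▸ hmul a ha _ haba⟩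

theorem prod_eq (hsq : ∀ x ∈ l, x * x = 1) (h : HurwitzMove l l') : l.prod = l'.prod := by
  obtain ⟨l₁, l₂, a, b, rfl, rfl⟩ := h
  have ha : a * a = 1 := hsq a (by simp)
  simp only [List.prod_append, List.prod_cons, List.prod_nil, mul_one]
  rw [show a * b * a * a = a * b * (a * a) by group, ha, mul_one]

end HurwitzMove

theorem Relation.EqvGen.hurwitzMove_forall_mem_and_prod_iff {X : Set W}
    (hmul : ∀ a ∈ X, ∀ b ∈ X, a * b * a ∈ X) (hsq : ∀ a ∈ X, a * a = 1) (g : W) {l l' : List W}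
    (h : Relation.EqvGen HurwitzMove l l') :
    ((∀ x ∈ l, x ∈ X) ∧ l.prod = g) ↔ ((∀ x ∈ l', x ∈ X) ∧ l'.prod = g) := by
  refine h.iff_of_forall_iff (P := fun l ↦ (∀ x ∈ l, x ∈ X) ∧ l.prod = g) fun l l' h ↦ ?_
  rw [h.forall_mem_iff hmul hsq]
  exact and_congr_right fun hl' ↦ by
    rw [h.prod_eq fun x hx ↦ hsq x (((h.forall_mem_iff hmul hsq).mpr hl') x hx)]

variable {r s : W} (hr : r * r = 1) (hs : s * s = 1)
include hr hs

theorem mul_zpow_eq_zpow_neg_mul (k : ℤ) : r * (r * s) ^ k = (r * s) ^ (-k) * r := by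
  have hconj : SemiconjBy r (r * s) (r * s)⁻¹ := by
    rw [SemiconjBy, mul_inv_rev, inv_eq_of_mul_eq_one_right hr, inv_eq_of_mul_eq_one_right hs,
      ← mul_assoc, hr, one_mul, mul_assoc, hr, mul_one]
  rw [← inv_zpow']
  exact hconj.zpow_right k

theorem exists_zpow_of_mem_closure_pair {x : W} (hx : x ∈ Subgroup.closure {r, s}) :
    ∃ k : ℤ, x = (r * s) ^ k ∨ x = (r * s) ^ k * r := by
  have hrot := mul_zpow_eq_zpow_neg_mul hr hs
  induction hx using Subgroup.closure_induction with
  | mem x hx =>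
    rcases hx with rfl | rfl
    · exact ⟨0, .inr (by rw [zpow_zero, one_mul])⟩
    · refine ⟨-1, .inr ?_⟩
      rw [zpow_neg_one, mul_inv_rev, mul_assoc, inv_mul_cancel, mul_one,
        inv_eq_of_mul_eq_one_right hs]
  | one => exact ⟨0, .inl (zpow_zero _).symm⟩
  | mul x y _ _ hx hy =>
    obtain ⟨k, rfl | rfl⟩ := hx <;> obtain ⟨m, rfl | rfl⟩ := hy
    · exact ⟨k + m, .inl (zpow_add _ _ _).symm⟩
    · exact ⟨k + m, .inr (by rw [← mul_assoc, ← zpow_add])⟩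
    · exact ⟨k + -m, .inr (by rw [mul_assoc, hrot, ← mul_assoc, ← zpow_add])⟩
    · refine ⟨k + -m, .inl ?_⟩
      rw [mul_assoc, ← mul_assoc r, hrot, mul_assoc, hr, mul_one, ← zpow_add]
  | inv x _ hx =>
    obtain ⟨k, rfl | rfl⟩ := hx
    · exact ⟨-k, .inl (zpow_neg _ _).symm⟩
    · exact ⟨k, .inr (by rw [mul_inv_rev, inv_eq_of_mul_eq_one_right hr, ← zpow_neg, hrot,
        neg_neg])⟩

theorem zpow_mul_mul_zpow_sub_one_mul (k : ℤ) :
    (r * s) ^ k * r * ((r * s) ^ (k - 1) * r) = r * s := by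
  rw [mul_assoc, ← mul_assoc r, mul_zpow_eq_zpow_neg_mul hr hs, mul_assoc, hr, mul_one,
    ← zpow_add, show k + -(k - 1) = 1 by ring, zpow_one]

theorem hurwitzMove_zpow_mul (k : ℤ) :
    HurwitzMove [(r * s) ^ k * r, (r * s) ^ (k - 1) * r]
      [(r * s) ^ (k + 1) * r, (r * s) ^ (k + 1 - 1) * r] := by
  have hmove : (r * s) ^ (k + 1) * r
      = (r * s) ^ k * r * ((r * s) ^ (k - 1) * r) * ((r * s) ^ k * r) := by
    rw [zpow_mul_mul_zpow_sub_one_mul hr hs]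
    group
  rw [add_sub_cancel_right, hmove]
  exact hurwitzMove_pair _ _

theorem eqvGen_hurwitzMove_zpow_mul (k : ℤ) :
    Relation.EqvGen HurwitzMove [r, s] [(r * s) ^ k * r, (r * s) ^ (k - 1) * r] := by
  have hrs : [r, s] = [(r * s) ^ (0 : ℤ) * r, (r * s) ^ ((0 : ℤ) - 1) * r] := by
    rw [zpow_zero, one_mul, zero_sub, zpow_neg_one, mul_inv_rev, mul_assoc, inv_mul_cancel,
      mul_one, inv_eq_of_mul_eq_one_right hs]
  rw [hrs]
  exact Relation.eqvGen_of_forall_rel_add_one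
    (f := fun k ↦ [(r * s) ^ k * r, (r * s) ^ (k - 1) * r]) (hurwitzMove_zpow_mul hr hs) k

end Group

namespace CoxeterSystem.IsReflection

variable {W : Type*} [Group W] {B : Type*} {M : CoxeterMatrix B} {cs : CoxeterSystem M W}

theorem lengthParity_eq {t : W} (ht : cs.IsReflection t) :
    cs.lengthParity t = Multiplicative.ofAdd 1 := by
  obtain ⟨w, i, rfl⟩ := ht
  simp [lengthParity_simple]

theorem exists_eq_zpow_mul_of_mem_closure {r s t : W} (hr : cs.IsReflection r)
    (hs : cs.IsReflection s) (ht : cs.IsReflection t) (h : t ∈ Subgroup.closure {r, s}) :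
    ∃ k : ℤ, t = (r * s) ^ k * r := by
  obtain ⟨k, rfl | rfl⟩ := exists_zpow_of_mem_closure_pair hr.mul_self hs.mul_self h
  · absurd ht.lengthParity_eq
    rw [map_zpow, map_mul, hr.lengthParity_eq, hs.lengthParity_eq, ← ofAdd_add,
      show (1 + 1 : ZMod 2) = 0 by decide, ofAdd_zero, one_zpow]
    decide
  · exact ⟨k, rfl⟩

end CoxeterSystem.IsReflection

theorem hurwitz_orbit_pair_eq_general
    {W : Type*} [Group W] {B : Type*}
    (M : CoxeterMatrix B) (cs : CoxeterSystem M W)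
    (r s : W) (hr : cs.IsReflection r) (hs : cs.IsReflection s)
    (t₁ t₂ : W) :
    Relation.EqvGen HurwitzMove [r, s] [t₁, t₂] ↔
      cs.IsReflection t₁ ∧ t₁ ∈ Subgroup.closure {r, s} ∧
      cs.IsReflection t₂ ∧ t₂ ∈ Subgroup.closure {r, s} ∧
      t₁ * t₂ = r * s := by
  set X : Set W := {t | cs.IsReflection t ∧ t ∈ Subgroup.closure {r, s}}
  have hmul : ∀ a ∈ X, ∀ b ∈ X, a * b * a ∈ X := fun a ha b hb ↦
    ⟨by simpa only [ha.1.inv] using hb.1.conj a, mul_mem (mul_mem ha.2 hb.2) ha.2⟩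
  have hsq : ∀ a ∈ X, a * a = 1 := fun a ha ↦ ha.1.mul_self
  constructor
  · intro h
    have hrs : (∀ x ∈ [r, s], x ∈ X) ∧ [r, s].prod = r * s := by
      simp [X, hr, hs, Subgroup.mem_closure_of_mem]
    simpa [X, and_assoc] using (h.hurwitzMove_forall_mem_and_prod_iff hmul hsq (r * s)).mp hrs
  · rintro ⟨ht₁, hm₁, -, -, hprod⟩
    obtain ⟨k, rfl⟩ := hr.exists_eq_zpow_mul_of_mem_closure hs ht₁ hm₁
    obtain rfl : t₂ = (r * s) ^ (k - 1) * r := mul_left_cancel <|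
      hprod.trans (zpow_mul_mul_zpow_sub_one_mul hr.mul_self hs.mul_self k).symm
    exact eqvGen_hurwitzMove_zpow_mul hr.mul_self hs.mul_self k

/-- Let `(W,S)` be a Coxeter system with reflection set `T` and let
`r ≠ s` be two reflections.  The `B₂`-Hurwitz orbit of the pair `(r, s)` is exactly the
set of pairs `(t₁, t₂)` of reflections of the subgroup `⟨r, s⟩` with `t₁ t₂ = r s`. -/
theorem hurwitz_orbit_pair_eq
    {W : Type*} [Group W] {B : Type*}
    (M : CoxeterMatrix B) (cs : CoxeterSystem M W)
    (r s : W) (hr : cs.IsReflection r) (hs : cs.IsReflection s) (hrs : r ≠ s)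
    (t₁ t₂ : W) :
    Relation.EqvGen HurwitzMove [r, s] [t₁, t₂] ↔
      cs.IsReflection t₁ ∧ t₁ ∈ Subgroup.closure {r, s} ∧
      cs.IsReflection t₂ ∧ t₂ ∈ Subgroup.closure {r, s} ∧
      t₁ * t₂ = r * s :=
  hurwitz_orbit_pair_eq_general M cs r s hr hs t₁ t₂
end

section
/- Let (W,S) be a Coxeter system of finite rank with reflection set T, and let c = s1⋯sn be a standard parabolic Coxeter element (a product of n pairwise distinct simple generators). Then any two factorizations c = t1⋯tn = t1'⋯tn' into reflections whose partial products are strictly increasing in S-length (ℓ(t1⋯t_k) < ℓ(t1⋯t_{k+1}) and ℓ(t1'⋯t_k') < ℓ(t1'⋯t_{k+1}') for all 0 ≤ k < n) lie in the same orbit under the Hurwitz action of the braid group B_n. -/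
theorem Nat.apply_eq_self_of_lt_apply_succ {f : ℕ → ℕ} {n : ℕ} (h0 : f 0 = 0)
    (hf : ∀ k < n, f k < f (k + 1)) (hn : f n ≤ n) : ∀ k ≤ n, f k = k := by
  have hgap : ∀ j k, j ≤ k → k ≤ n → f j + (k - j) ≤ f k := by
    intro j k hjk
    induction k, hjk using Nat.le_induction with
    | base => simp
    | succ k hjk ih =>
      intro hk
      have := hf k (by omega)
      have := ih (by omega)
      omega
  intro k hk
  have := hgap 0 k (Nat.zero_le k) hk
  have := hgap k n hk le_rfl
  omega

theorem Relation.EqvGen.map {α β : Type*} {r : α → α → Prop} {r' : β → β → Prop} (f : α → β)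
    (hf : ∀ a b, r a b → r' (f a) (f b)) {a b : α} (h : EqvGen r a b) :
    EqvGen r' (f a) (f b) := by
  induction h with
  | rel a b hab => exact .rel _ _ (hf a b hab)
  | refl => exact .refl _
  | symm _ _ _ ih => exact .symm _ _ ih
  | trans _ _ _ _ _ ih₁ ih₂ => exact .trans _ _ _ ih₁ ih₂

theorem HurwitzMove.append_right {W : Type*} [Group W] {p q : List W} (h : HurwitzMove p q)
    (r : List W) : HurwitzMove (p ++ r) (q ++ r) := by
  obtain ⟨l₁, l₂, a, b, rfl, rfl⟩ := h
  exact ⟨l₁, l₂ ++ r, a, b, by simp, by simp⟩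

theorem eqvGen_hurwitzMove_append_right {W : Type*} [Group W] {p q : List W}
    (h : Relation.EqvGen HurwitzMove p q) (r : List W) :
    Relation.EqvGen HurwitzMove (p ++ r) (q ++ r) :=
  h.map (· ++ r) fun _ _ hab => hab.append_right r

section SignedConjugation

variable {W : Type*} [Group W]

open scoped Classical in
noncomputable def signIfEq (a x : W) : ℤˣ := if x = a then -1 else 1

theorem signIfEq_conj (a g x : W) : signIfEq a (g * x * g⁻¹) = signIfEq (g⁻¹ * a * g) x := by
  unfold signIfEq
  congr 1
  refine propext ⟨fun h => ?_, fun h => ?_⟩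
  · rw [← h]; group
  · rw [h]; group

noncomputable def reflectionPerm (a : W) (ha : a * a = 1) : Equiv.Perm (W × ℤˣ) :=
  Function.Involutive.toPerm (fun p => (a * p.1 * a⁻¹, signIfEq a p.1 * p.2)) fun p => by
    have hconj : a⁻¹ * a * a = a := by group
    ext
    · simp only
      rw [show a * (a * p.1 * a⁻¹) * a⁻¹ = (a * a) * p.1 * (a * a)⁻¹ by group, ha]
      group
    · simp only [signIfEq_conj, hconj, ← mul_assoc, Int.units_mul_self, one_mul]

theorem reflectionPerm_apply (a : W) (ha : a * a = 1) (p : W × ℤˣ) :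
    reflectionPerm a ha p = (a * p.1 * a⁻¹, signIfEq a p.1 * p.2) := rfl

theorem pow_inv_mul_eq_mul_pow {a b : W} (ha : a * a = 1) (hb : b * b = 1) (k : ℕ) :
    ((a * b) ^ k)⁻¹ * b = b * (a * b) ^ k := by
  have hb' : b⁻¹ = b := inv_eq_of_mul_eq_one_right hb
  have hconj : b * (a * b) * b⁻¹ = (a * b)⁻¹ := by
    simp only [mul_inv_rev, hb', inv_eq_of_mul_eq_one_right ha, mul_assoc, hb, mul_one]
  rw [← inv_pow, ← hconj, conj_pow]
  group

theorem reflectionPerm_mul_pow_apply {a b : W} (ha : a * a = 1) (hb : b * b = 1) (k : ℕ)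
    (p : W × ℤˣ) :
    ((reflectionPerm a ha * reflectionPerm b hb) ^ k) p =
      ((a * b) ^ k * p.1 * ((a * b) ^ k)⁻¹,
        (∏ j ∈ Finset.range (2 * k), signIfEq (b * (a * b) ^ j) p.1) * p.2) := by
  have hb' : b⁻¹ = b := inv_eq_of_mul_eq_one_right hb
  have hflip := pow_inv_mul_eq_mul_pow ha hb
  set q := a * b with hq
  clear_value q
  induction k with
  | zero => simp
  | succ k ih =>
    rw [pow_succ', Equiv.Perm.mul_apply, ih, Equiv.Perm.mul_apply, reflectionPerm_apply,
      reflectionPerm_apply]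
    refine Prod.ext ?_ ?_
    · change a * (b * (q ^ k * p.1 * (q ^ k)⁻¹) * b⁻¹) * a⁻¹ = q ^ (k + 1) * p.1 * (q ^ (k + 1))⁻¹
      rw [show ∀ y, a * (b * y * b⁻¹) * a⁻¹ = q * y * q⁻¹ from fun y => by rw [hq]; group,
        pow_succ', mul_inv_rev]
      group
    · have hb2k : (q ^ k)⁻¹ * b * q ^ k = b * q ^ (2 * k) := by
        rw [hflip, mul_assoc, ← pow_add, two_mul]
      have ha2k : (b * q ^ k)⁻¹ * a * (b * q ^ k) = b * q ^ (2 * k + 1) := by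
        calc (b * q ^ k)⁻¹ * a * (b * q ^ k) = ((q ^ k)⁻¹ * b) * q * q ^ k := by
              rw [hq, mul_inv_rev, hb']; group
          _ = b * q ^ (2 * k + 1) := by rw [hflip]; group
      have hconj : b * (q ^ k * p.1 * (q ^ k)⁻¹) * b⁻¹ = (b * q ^ k) * p.1 * (b * q ^ k)⁻¹ := by
        group
      simp only
      rw [hconj, signIfEq_conj, ha2k, signIfEq_conj, hb2k, Nat.mul_succ, Finset.prod_range_succ,
        Finset.prod_range_succ]
      ac_rfl

theorem reflectionPerm_mul_pow_eq_one {a b : W} (ha : a * a = 1) (hb : b * b = 1) {m : ℕ}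
    (hm : (a * b) ^ m = 1) : (reflectionPerm a ha * reflectionPerm b hb) ^ m = 1 := by
  ext1 p
  rw [reflectionPerm_mul_pow_apply, hm, two_mul, Finset.prod_range_add]
  simp only [pow_add, hm, one_mul, inv_one, mul_one, Int.units_mul_self, Prod.mk.eta,
    Equiv.Perm.one_apply]

end SignedConjugation

namespace CoxeterSystem

variable {W : Type*} [Group W] {B : Type*} {M : CoxeterMatrix B} (cs : CoxeterSystem M W)

local prefix:100 "s" => cs.simple
local prefix:100 "π" => cs.wordProd
local prefix:100 "ℓ" => cs.length
local prefix:100 "ris" => cs.rightInvSeq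

noncomputable def signPerm : W →* Equiv.Perm (W × ℤˣ) :=
  cs.lift ⟨fun i => reflectionPerm (s i) (cs.simple_mul_simple_self i),
    fun i i' => reflectionPerm_mul_pow_eq_one _ _ (cs.simple_mul_simple_pow i i')⟩

theorem signPerm_simple (i : B) :
    cs.signPerm (s i) = reflectionPerm (s i) (cs.simple_mul_simple_self i) :=
  cs.lift_apply_simple _ i

theorem signPerm_wordProd_apply (ω : List B) (p : W × ℤˣ) :
    cs.signPerm (π ω) p =
      (π ω * p.1 * (π ω)⁻¹, ((ris ω).map (signIfEq · p.1)).prod * p.2) := by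
  induction ω with
  | nil => simp [rightInvSeq]
  | cons i ω ih =>
    rw [wordProd_cons, map_mul, Equiv.Perm.mul_apply, ih, signPerm_simple, reflectionPerm_apply]
    refine Prod.ext (by simp only; group) ?_
    rw [signIfEq_conj]
    simp only [rightInvSeq, List.map_cons, List.prod_cons, mul_assoc]

noncomputable def inversionSign (w x : W) : ℤˣ := (cs.signPerm w (x, 1)).2

theorem inversionSign_wordProd (ω : List B) (x : W) :
    cs.inversionSign (π ω) x = ((ris ω).map (signIfEq · x)).prod := by
  simp [inversionSign, signPerm_wordProd_apply]

theorem signPerm_apply (w : W) (p : W × ℤˣ) :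
    cs.signPerm w p = (w * p.1 * w⁻¹, cs.inversionSign w p.1 * p.2) := by
  obtain ⟨ω, rfl⟩ := cs.wordProd_surjective w
  rw [signPerm_wordProd_apply, inversionSign_wordProd]

theorem mem_rightInvSeq_of_inversionSign_eq_neg_one {ω : List B} {x : W}
    (h : cs.inversionSign (π ω) x = -1) : x ∈ ris ω := by
  by_contra hx
  rw [inversionSign_wordProd, List.prod_eq_one] at h
  · exact absurd h (by decide)
  · simp only [List.mem_map]
    rintro _ ⟨t, ht, rfl⟩
    have hxt : x ≠ t := fun h => hx (h ▸ ht)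
    simp [signIfEq, hxt]

theorem signPerm_apply_self_of_isReflection {t : W} (ht : cs.IsReflection t) (ε : ℤˣ) :
    cs.signPerm t (t, ε) = (t, -ε) := by
  obtain ⟨w, i, rfl⟩ := ht
  -- `w s w⁻¹` acts as `w ∘ s ∘ w⁻¹`, and `s` negates the sign at `s`.
  obtain ⟨⟨y, δ⟩, hyδ⟩ : ∃ q, (cs.signPerm w)⁻¹ (w * s i * w⁻¹, ε) = q := ⟨_, rfl⟩
  have hw := (Equiv.Perm.inv_eq_iff_eq.mp hyδ).symm
  rw [signPerm_apply, Prod.mk.injEq] at hw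
  obtain rfl : y = s i := by simpa using hw.1
  rw [map_mul, map_mul, map_inv, Equiv.Perm.mul_apply, Equiv.Perm.mul_apply, hyδ, signPerm_simple,
    reflectionPerm_apply, signPerm_apply]
  simp [signIfEq, ← hw.2]

theorem inversionSign_mul_self {w t : W} (ht : cs.IsReflection t) :
    cs.inversionSign (w * t) t = -cs.inversionSign w t := by
  have h := congrArg Prod.snd (cs.signPerm_apply (w * t) (t, 1))
  rw [map_mul, Equiv.Perm.mul_apply, cs.signPerm_apply_self_of_isReflection ht, signPerm_apply] at h
  simpa using h.symm

theorem inversionSign_eq_neg_one_iff {w t : W} (ht : cs.IsReflection t) :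
    cs.inversionSign w t = -1 ↔ ℓ (w * t) < ℓ w := by
  have hdesc : ∀ w, cs.inversionSign w t = -1 → ℓ (w * t) < ℓ w := fun w h => by
    obtain ⟨ω, hω, rfl⟩ := cs.exists_isReduced w
    exact (cs.isRightInversion_of_mem_rightInvSeq hω
      (cs.mem_rightInvSeq_of_inversionSign_eq_neg_one h)).2
  refine ⟨hdesc w, fun hlt => ?_⟩
  -- a sign `1` at `w` would be a sign `-1` at `w * t`, making `t` a right inversion of `w * t`
  rcases Int.units_eq_one_or (cs.inversionSign w t) with h | h
  · have := hdesc (w * t) (by rw [cs.inversionSign_mul_self ht, h])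
    rw [mul_assoc, ht.mul_self, mul_one] at this
    omega
  · exact h

/-- The strong exchange condition. -/
theorem mem_rightInvSeq_of_length_mul_lt {t : W} (ht : cs.IsReflection t) {ω : List B}
    (hlt : ℓ (π ω * t) < ℓ (π ω)) : t ∈ ris ω :=
  cs.mem_rightInvSeq_of_inversionSign_eq_neg_one ((cs.inversionSign_eq_neg_one_iff ht).mpr hlt)

theorem isRightDescent_mul_of_ne {c t : W} {i : B} (hc : cs.IsRightDescent c i)
    (ht : cs.IsReflection t) (hct : ℓ (c * t) + 1 = ℓ c) (hne : t ≠ s i) :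
    cs.IsRightDescent (c * t) i := by
  obtain ⟨τ, hτ, hcs⟩ := cs.exists_isReduced (c * s i)
  have hc' : c = π (τ.concat i) := by rw [wordProd_concat, ← hcs, simple_mul_simple_cancel_right]
  -- strong exchange for the reduced word `τ ++ [i]` of `c` deletes a letter of `τ`
  have hmem := cs.mem_rightInvSeq_of_length_mul_lt ht (ω := τ.concat i) (by rw [← hc']; omega)
  rw [rightInvSeq_concat, List.concat_eq_append, List.mem_append, List.mem_singleton,
    List.mem_map] at hmem
  obtain ⟨x, hx, rfl⟩ := hmem.resolve_right hne
  have hxlt := (cs.isRightInversion_of_mem_rightInvSeq hτ hx).2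
  rw [← hcs] at hxlt
  unfold IsRightDescent
  rw [show c * (MulAut.conj (s i)) x * s i = c * s i * x by simp [mul_assoc]]
  have := (cs.isRightDescent_iff).mp hc
  omega

theorem length_prod_le_of_forall_mem_range_simple {l : List W}
    (h : ∀ x ∈ l, x ∈ Set.range cs.simple) : ℓ l.prod ≤ l.length := by
  induction l with
  | nil => simp
  | cons x l ih =>
    obtain ⟨i, rfl⟩ := h x List.mem_cons_self
    have := cs.length_mul_le (s i) l.prod
    rw [length_simple] at this
    simp only [List.prod_cons, List.length_cons]
    have := ih fun y hy => h y (List.mem_cons_of_mem _ hy)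
    omega

/-- The partial products of `l` form a saturated chain `1 ⋖ t₁ ⋖ t₁t₂ ⋖ ⋯` in Bruhat order. -/
def IsBruhatChain (l : List W) : Prop :=
  (∀ t ∈ l, cs.IsReflection t) ∧ ∀ k ≤ l.length, ℓ (l.take k).prod = k

theorem IsBruhatChain.length_prod {cs : CoxeterSystem M W} {l : List W}
    (h : cs.IsBruhatChain l) : cs.length l.prod = l.length := by
  simpa using h.2 l.length le_rfl

theorem isBruhatChain_append_singleton_iff {p : List W} {t : W} :
    cs.IsBruhatChain (p ++ [t]) ↔
      cs.IsBruhatChain p ∧ cs.IsReflection t ∧ ℓ (p.prod * t) = p.length + 1 := by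
  have htake : ∀ k ≤ p.length, (p ++ [t]).take k = p.take k := fun k hk =>
    List.take_append_of_le_length hk
  constructor
  · rintro ⟨hrefl, hlen⟩
    refine ⟨⟨fun x hx => hrefl x (List.mem_append_left _ hx), fun k hk => ?_⟩,
      hrefl t (by simp), by simpa using hlen (p.length + 1) (by simp)⟩
    rw [← htake k hk]
    exact hlen k (by simp; omega)
  · rintro ⟨⟨hrefl, hlen⟩, ht, hpt⟩
    refine ⟨fun x hx => ?_, fun k hk => ?_⟩
    · rcases List.mem_append.mp hx with hx | hx
      · exact hrefl x hx
      · rwa [List.mem_singleton.mp hx]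
    · rcases Nat.lt_or_ge k (p.length + 1) with hk' | hk'
      · rw [htake k (by omega)]
        exact hlen k (by omega)
      · simp only [List.length_append, List.length_singleton] at hk
        rw [show k = (p ++ [t]).length by simp; omega, List.take_length, List.prod_append,
          List.prod_singleton, hpt]
        simp

theorem isBruhatChain_of_length_take_lt {l : List W} (hrefl : ∀ t ∈ l, cs.IsReflection t)
    (hinc : ∀ k < l.length, ℓ (l.take k).prod < ℓ (l.take (k + 1)).prod)
    (hle : ℓ l.prod ≤ l.length) : cs.IsBruhatChain l :=
  ⟨hrefl, Nat.apply_eq_self_of_lt_apply_succ (by simp) hinc (by simpa using hle)⟩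

theorem exists_eqvGen_hurwitzMove_append_simple {l : List W} (hl : cs.IsBruhatChain l) {i : B}
    (hi : cs.IsRightDescent l.prod i) :
    ∃ p, cs.IsBruhatChain (p ++ [s i]) ∧ (p ++ [s i]).prod = l.prod ∧
      Relation.EqvGen HurwitzMove l (p ++ [s i]) := by
  induction l using List.reverseRecOn generalizing i with
  | nil => exact absurd hi (by simpa using cs.not_isRightDescent_one i)
  | append_singleton p t ih =>
    obtain ⟨hp, ht, hpt⟩ := cs.isBruhatChain_append_singleton_iff.mp hl
    by_cases hts : t = s i
    · subst hts
      exact ⟨p, hl, rfl, .refl _⟩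
    rw [List.prod_append, List.prod_singleton] at hi ⊢
    have hp_prod : p.prod * t * t = p.prod := by rw [mul_assoc, ht.mul_self, mul_one]
    obtain ⟨q, hq, hq_prod, hpq⟩ := ih hp (by
      simpa [hp_prod] using
        cs.isRightDescent_mul_of_ne hi ht (by rw [hp_prod, hpt, hp.length_prod]) hts)
    have hq_len : q.length + 1 = p.length := by
      simpa [hq_prod, hp.length_prod] using hq.length_prod.symm
    rw [List.prod_append, List.prod_singleton] at hq_prod
    have hsts : q.prod * (s i * t * s i) = p.prod * t * s i := by
      rw [← hq_prod]; group
    have hct := (cs.isRightDescent_iff).mp hi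
    refine ⟨q ++ [s i * t * s i], ?_, ?_, ?_⟩
    · refine cs.isBruhatChain_append_singleton_iff.mpr ⟨?_, cs.isReflection_simple i, ?_⟩
      · refine cs.isBruhatChain_append_singleton_iff.mpr
          ⟨(cs.isBruhatChain_append_singleton_iff.mp hq).1, ?_, by rw [hsts]; omega⟩
        simpa using ht.conj (s i)
      · rw [List.prod_append, List.prod_singleton, hsts, simple_mul_simple_cancel_right]
        simp; omega
    · simp only [List.prod_append, List.prod_singleton]
      rw [hsts, simple_mul_simple_cancel_right]
    · refine .trans _ _ _ (eqvGen_hurwitzMove_append_right hpq [t]) (.rel _ _ ?_)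
      exact ⟨q, [], s i, t, by simp, by simp⟩

theorem eqvGen_hurwitzMove_of_isBruhatChain {l l' : List W} (hl : cs.IsBruhatChain l)
    (hl' : cs.IsBruhatChain l') (hprod : l.prod = l'.prod) : Relation.EqvGen HurwitzMove l l' := by
  induction hn : ℓ l.prod generalizing l l' with
  | zero =>
    have hl_nil : l = [] := List.length_eq_zero_iff.mp (by rw [← hl.length_prod, hn])
    have hl'_nil : l' = [] := List.length_eq_zero_iff.mp (by rw [← hl'.length_prod, ← hprod, hn])
    rw [hl_nil, hl'_nil]
    exact .refl _
  | succ n ih =>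
    obtain ⟨i, hi⟩ := cs.exists_rightDescent_of_ne_one (w := l.prod) (by
      rintro h; rw [h, length_one] at hn; omega)
    obtain ⟨p, hp, hp_prod, hlp⟩ := cs.exists_eqvGen_hurwitzMove_append_simple hl hi
    obtain ⟨q, hq, hq_prod, hlq⟩ := cs.exists_eqvGen_hurwitzMove_append_simple hl' (hprod ▸ hi)
    have hp' := (cs.isBruhatChain_append_singleton_iff.mp hp).1
    have hpq : Relation.EqvGen HurwitzMove p q := by
      refine ih hp' (cs.isBruhatChain_append_singleton_iff.mp hq).1 ?_ ?_
      · have h := hp_prod.trans (hprod.trans hq_prod.symm)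
        simp only [List.prod_append, List.prod_singleton] at h
        exact mul_right_cancel h
      · have h := hp.length_prod
        rw [hp_prod, hn, List.length_append, List.length_singleton] at h
        rw [hp'.length_prod]
        omega
    exact hlp.trans _ _ _ ((eqvGen_hurwitzMove_append_right hpq _).trans _ _ _ hlq.symm)

end CoxeterSystem

theorem increasing_factorizations_same_hurwitz_orbit_general
    {W : Type*} [Group W] {B : Type*}
    (M : CoxeterMatrix B) (cs : CoxeterSystem M W)
    (n : ℕ) (c : W)
    (ls : List W) (hsimple : ∀ x ∈ ls, x ∈ Set.range cs.simple)
    (hlslen : ls.length = n) (hlsprod : ls.prod = c)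
    (l l' : List W) (hlen : l.length = n) (hlen' : l'.length = n)
    (hrefl : ∀ t ∈ l, cs.IsReflection t) (hrefl' : ∀ t ∈ l', cs.IsReflection t)
    (hprod : l.prod = c) (hprod' : l'.prod = c)
    (hinc : ∀ k < n, cs.length ((l.take k).prod) < cs.length ((l.take (k + 1)).prod))
    (hinc' : ∀ k < n,
      cs.length ((l'.take k).prod) < cs.length ((l'.take (k + 1)).prod)) :
    Relation.EqvGen HurwitzMove l l' := by
  have hc : cs.length c ≤ n :=
    hlsprod ▸ hlslen ▸ cs.length_prod_le_of_forall_mem_range_simple hsimple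
  subst hlen
  refine cs.eqvGen_hurwitzMove_of_isBruhatChain
    (cs.isBruhatChain_of_length_take_lt hrefl hinc (hprod ▸ hc))
    (cs.isBruhatChain_of_length_take_lt hrefl' (hlen' ▸ hinc') (by rw [hprod', hlen']; exact hc))
    (hprod.trans hprod'.symm)

/-- Let `(W,S)` be a Coxeter system of finite rank and let
`c = s₁ ⋯ sₙ` be a standard parabolic Coxeter element (a product of `n` pairwise
distinct simple generators).  Then any two factorizations of `c` into `n` reflections
whose partial products are strictly increasing in `S`-length lie in the same Hurwitz
orbit of the braid group `Bₙ`. -/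
theorem increasing_factorizations_same_hurwitz_orbit
    {W : Type*} [Group W] {B : Type*} [Finite B]
    (M : CoxeterMatrix B) (cs : CoxeterSystem M W)
    (n : ℕ) (c : W)
    (ls : List W) (hnd : ls.Nodup) (hsimple : ∀ x ∈ ls, x ∈ Set.range cs.simple)
    (hlslen : ls.length = n) (hlsprod : ls.prod = c)
    (l l' : List W) (hlen : l.length = n) (hlen' : l'.length = n)
    (hrefl : ∀ t ∈ l, cs.IsReflection t) (hrefl' : ∀ t ∈ l', cs.IsReflection t)
    (hprod : l.prod = c) (hprod' : l'.prod = c)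
    (hinc : ∀ k < n, cs.length ((l.take k).prod) < cs.length ((l.take (k + 1)).prod))
    (hinc' : ∀ k < n,
      cs.length ((l'.take k).prod) < cs.length ((l'.take (k + 1)).prod)) :
    Relation.EqvGen HurwitzMove l l' :=
  increasing_factorizations_same_hurwitz_orbit_general M cs n c ls hsimple hlslen hlsprod l l' hlen
    hlen' hrefl hrefl' hprod hprod' hinc hinc'
end
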